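/- arXiv:1910.13873 — 3 statements merged into one kernel-verified Lean document; each statement's English description precedes it below -/
import Mathlib

section
/- For all u₁,…,u_{m+1} > 0 and v₁,…,v_h > 0 one has the identity ∑_{i=1}^{m+1} (log u_i)·f_i + ∑_{j=1}^{h} (log v_j)·g_j = −(A−B)·log(A/B) − (B−C)·log(B/C), and in particular ∑_{i=1}^{m+1} (log u_i)·f_i + ∑_{j=1}^{h} (log v_j)·g_j ≤ 0. -/
/-!
Taking logarithms turns `A`, `B`, `C` into linear combinations of the `log uᵢ`, `log vⱼ`, and
the weighted sum regroups, as a polynomial identity, into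
`-(A - B)(log A - log B) - (B - C)(log B - log C)`.
Each of the two terms is nonpositive because `log` is monotone.
-/

open Finset Real

theorem Finset.sum_mul_eq_sum_mul_of_forall_eq {ι R : Type*} [NonUnitalNonAssocSemiring R]
    {s : Finset ι} {x f : ι → R} {c : R} (hf : ∀ i ∈ s, f i = c) : ∑ i ∈ s, x i * f i = (∑ i ∈ s, x i) * c := by
  rw [sum_mul]
  exact sum_congr rfl fun i hi => by rw [hf i hi]

theorem Real.log_prod_mul_pow {ι : Type*} {s : Finset ι} {u : ι → ℝ} {x : ℝ}
    (hu : ∀ i ∈ s, 0 < u i) (hx : 0 < x) (k : ℕ) :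
    log ((∏ i ∈ s, u i) * x ^ k) = ∑ i ∈ s, log (u i) + k * log x := by
  rw [log_mul (prod_pos hu).ne' (pow_pos hx k).ne', log_pow, log_prod fun i hi => (hu i hi).ne']

theorem Real.sub_mul_log_div_nonneg {x y : ℝ} (hx : 0 < x) (hy : 0 < y) :
    0 ≤ (x - y) * log (x / y) := by
  rw [log_div hx.ne' hy.ne']
  rcases le_total x y with hxy | hyx
  · exact mul_nonneg_of_nonpos_of_nonpos (sub_nonpos.2 hxy) (sub_nonpos.2 (log_le_log hx hxy))
  · exact mul_nonneg (sub_nonneg.2 hyx) (sub_nonneg.2 (log_le_log hy hyx))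

theorem S2_entropy_dissipation_general (m h k l : ℕ)
    (hm : 1 ≤ m)
    (u v : ℕ → ℝ)
    (hu : ∀ i ∈ Finset.Icc 1 (m + 1), 0 < u i)
    (hv : ∀ j ∈ Finset.Icc 1 h, 0 < v j)
    (A B C : ℝ)
    (hA : A = (∏ i ∈ Finset.Icc 1 m, u i) * u (m + 1) ^ k)
    (hB : B = u m * u (m + 1))
    (hC : C = u m ^ l * ∏ j ∈ Finset.Icc 1 h, v j)
    (f g : ℕ → ℝ)
    (hfi : ∀ i ∈ Finset.Icc 1 (m - 1), f i = B - A)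
    (hfm : f m = ((l : ℝ) - 1) * (B - C))
    (hfm1 : f (m + 1) = -((k : ℝ) - 1) * A + ((k : ℝ) - 2) * B + C)
    (hg : ∀ j ∈ Finset.Icc 1 h, g j = B - C) :
    (∑ i ∈ Finset.Icc 1 (m + 1), Real.log (u i) * f i)
        + ∑ j ∈ Finset.Icc 1 h, Real.log (v j) * g j
      = -(A - B) * Real.log (A / B) - (B - C) * Real.log (B / C) ∧
    (∑ i ∈ Finset.Icc 1 (m + 1), Real.log (u i) * f i)
        + ∑ j ∈ Finset.Icc 1 h, Real.log (v j) * g j ≤ 0 := by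
  obtain ⟨n, rfl⟩ : ∃ n, m = n + 1 := ⟨m - 1, by omega⟩
  rw [Nat.add_sub_cancel] at hfi
  have hu' : ∀ i ∈ Icc 1 (n + 1), 0 < u i := fun i hi =>
    hu i (Icc_subset_Icc_right (by omega) hi)
  have hum : 0 < u (n + 1) := hu _ (by simp)
  have hum1 : 0 < u (n + 1 + 1) := hu _ (by simp)
  have hA0 : 0 < A := hA ▸ mul_pos (prod_pos hu') (pow_pos hum1 k)
  have hB0 : 0 < B := hB ▸ mul_pos hum hum1
  have hC0 : 0 < C := hC ▸ mul_pos (pow_pos hum l) (prod_pos hv)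
  have hlogA : log A = ∑ i ∈ Icc 1 n, log (u i) + log (u (n + 1)) + k * log (u (n + 1 + 1)) := by
    rw [hA, log_prod_mul_pow hu' hum1, sum_Icc_succ_top (by omega)]
  have hlogB : log B = log (u (n + 1)) + log (u (n + 1 + 1)) := hB ▸ log_mul hum.ne' hum1.ne'
  have hlogC : log C = l * log (u (n + 1)) + ∑ j ∈ Icc 1 h, log (v j) := by
    rw [hC, mul_comm, log_prod_mul_pow hv hum, add_comm]
  have identity : (∑ i ∈ Icc 1 (n + 1 + 1), log (u i) * f i) + ∑ j ∈ Icc 1 h, log (v j) * g j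
      = -(A - B) * log (A / B) - (B - C) * log (B / C) := by
    rw [sum_Icc_succ_top (by omega), sum_Icc_succ_top (by omega),
      sum_mul_eq_sum_mul_of_forall_eq hfi, sum_mul_eq_sum_mul_of_forall_eq hg, hfm, hfm1,
      log_div hA0.ne' hB0.ne', log_div hB0.ne' hC0.ne', hlogA, hlogB, hlogC]
    ring
  refine ⟨identity, identity ▸ ?_⟩
  linarith [sub_mul_log_div_nonneg hA0 hB0, sub_mul_log_div_nonneg hB0 hC0]

/-- **Entropy dissipation for the network of Example 4.2.** With
`A = u₁⋯u_m u_{m+1}^k`, `B = u_m u_{m+1}`, `C = u_m^ℓ v₁⋯v_h`, and mass-action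
nonlinearities `f_i = B - A` (`i = 1,…,m-1`), `f_m = (ℓ-1)(B - C)`,
`f_{m+1} = -(k-1)A + (k-2)B + C`, `g_j = B - C` (`j = 1,…,h`), one has
`∑ log(u_i) f_i + ∑ log(v_j) g_j = -(A-B) log(A/B) - (B-C) log(B/C) ≤ 0`. -/
theorem S2_entropy_dissipation (m h k l : ℕ)
    (hm : 1 ≤ m) (hh : 1 ≤ h) (hk : 2 ≤ k) (hl : 2 ≤ l)
    (u v : ℕ → ℝ)
    (hu : ∀ i ∈ Finset.Icc 1 (m + 1), 0 < u i)
    (hv : ∀ j ∈ Finset.Icc 1 h, 0 < v j)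
    (A B C : ℝ)
    (hA : A = (∏ i ∈ Finset.Icc 1 m, u i) * u (m + 1) ^ k)
    (hB : B = u m * u (m + 1))
    (hC : C = u m ^ l * ∏ j ∈ Finset.Icc 1 h, v j)
    (f g : ℕ → ℝ)
    (hfi : ∀ i ∈ Finset.Icc 1 (m - 1), f i = B - A)
    (hfm : f m = ((l : ℝ) - 1) * (B - C))
    (hfm1 : f (m + 1) = -((k : ℝ) - 1) * A + ((k : ℝ) - 2) * B + C)
    (hg : ∀ j ∈ Finset.Icc 1 h, g j = B - C) :
    (∑ i ∈ Finset.Icc 1 (m + 1), Real.log (u i) * f i)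
        + ∑ j ∈ Finset.Icc 1 h, Real.log (v j) * g j
      = -(A - B) * Real.log (A / B) - (B - C) * Real.log (B / C) ∧
    (∑ i ∈ Finset.Icc 1 (m + 1), Real.log (u i) * f i)
        + ∑ j ∈ Finset.Icc 1 h, Real.log (v j) * g j ≤ 0 :=
  S2_entropy_dissipation_general m h k l hm u v hu hv A B C hA hB hC f g hfi hfm hfm1 hg
end

section
/- For all nonnegative reals u₁,…,u_{m+1}, v₁,…,v_h: f_i ≤ u_m u_{m+1} for each i = 1,…,m−1; f_m ≤ (ℓ−1)u_m u_{m+1}; f_m + (ℓ−1)·f_{m+1} ≤ (ℓ−1)(k−1)·u_m u_{m+1}; and f_{m+1} + g_j ≤ (k−1)·u_m u_{m+1} for each j = 1,…,h. Consequently each of these linear combinations is at most (ℓ−1)(k−1)·(1 + ∑_{i=1}^{m+1} u_i + ∑_{j=1}^{h} v_j)². -/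
open Finset

/-- **Intermediate sum condition for the network of Example 4.2.** With
`A = u₁⋯u_m u_{m+1}^k`, `B = u_m u_{m+1}`, `C = u_m^ℓ v₁⋯v_h` and nonlinearities
`f_i = B - A` (`i = 1,…,m-1`), `f_m = (ℓ-1)(B - C)`, `f_{m+1} = -(k-1)A + (k-2)B + C`,
`g_j = B - C`, for nonnegative arguments: `f_i ≤ u_m u_{m+1}`,
`f_m ≤ (ℓ-1) u_m u_{m+1}`, `f_m + (ℓ-1) f_{m+1} ≤ (ℓ-1)(k-1) u_m u_{m+1}`,
`f_{m+1} + g_j ≤ (k-1) u_m u_{m+1}`, and in consequence each of these linear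
combinations is at most `(ℓ-1)(k-1)(1 + ∑ u_i + ∑ v_j)²`. -/
theorem S2_intermediate_sum (m h k l : ℕ)
    (hm : 1 ≤ m) (hh : 1 ≤ h) (hk : 2 ≤ k) (hl : 2 ≤ l)
    (u v : ℕ → ℝ)
    (hu : ∀ i ∈ Finset.Icc 1 (m + 1), 0 ≤ u i)
    (hv : ∀ j ∈ Finset.Icc 1 h, 0 ≤ v j)
    (A B C : ℝ)
    (hA : A = (∏ i ∈ Finset.Icc 1 m, u i) * u (m + 1) ^ k)
    (hB : B = u m * u (m + 1))
    (hC : C = u m ^ l * ∏ j ∈ Finset.Icc 1 h, v j)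
    (f g : ℕ → ℝ)
    (hfi : ∀ i ∈ Finset.Icc 1 (m - 1), f i = B - A)
    (hfm : f m = ((l : ℝ) - 1) * (B - C))
    (hfm1 : f (m + 1) = -((k : ℝ) - 1) * A + ((k : ℝ) - 2) * B + C)
    (hg : ∀ j ∈ Finset.Icc 1 h, g j = B - C)
    (S : ℝ)
    (hS : S = 1 + (∑ i ∈ Finset.Icc 1 (m + 1), u i) + ∑ j ∈ Finset.Icc 1 h, v j) :
    (∀ i ∈ Finset.Icc 1 (m - 1), f i ≤ u m * u (m + 1)) ∧
    f m ≤ ((l : ℝ) - 1) * (u m * u (m + 1)) ∧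
    f m + ((l : ℝ) - 1) * f (m + 1)
        ≤ ((l : ℝ) - 1) * ((k : ℝ) - 1) * (u m * u (m + 1)) ∧
    (∀ j ∈ Finset.Icc 1 h, f (m + 1) + g j ≤ ((k : ℝ) - 1) * (u m * u (m + 1))) ∧
    (∀ i ∈ Finset.Icc 1 (m - 1), f i ≤ ((l : ℝ) - 1) * ((k : ℝ) - 1) * S ^ 2) ∧
    f m ≤ ((l : ℝ) - 1) * ((k : ℝ) - 1) * S ^ 2 ∧
    f m + ((l : ℝ) - 1) * f (m + 1) ≤ ((l : ℝ) - 1) * ((k : ℝ) - 1) * S ^ 2 ∧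
    (∀ j ∈ Finset.Icc 1 h,
      f (m + 1) + g j ≤ ((l : ℝ) - 1) * ((k : ℝ) - 1) * S ^ 2) := by
  have hmem : m ∈ Finset.Icc 1 (m + 1) := by simp [hm]
  have hmem1 : m + 1 ∈ Finset.Icc 1 (m + 1) := by simp
  have hum : 0 ≤ u m := hu m hmem
  have hum1 : 0 ≤ u (m + 1) := hu (m + 1) hmem1
  have hA0 : 0 ≤ A := by
    rw [hA]
    exact mul_nonneg (Finset.prod_nonneg fun i hi => hu i (by
      simp at hi ⊢; omega)) (pow_nonneg hum1 k)
  have hB0 : 0 ≤ B := by rw [hB]; exact mul_nonneg hum hum1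
  have hC0 : 0 ≤ C := by
    rw [hC]
    exact mul_nonneg (pow_nonneg hum l) (Finset.prod_nonneg fun j hj => hv j hj)
  have hk1 : (2 : ℝ) ≤ (k : ℝ) := by exact_mod_cast hk
  have hl1 : (2 : ℝ) ≤ (l : ℝ) := by exact_mod_cast hl
  have hSu : u m ≤ S ∧ u (m + 1) ≤ S ∧ 0 ≤ S := by
    have h1 : u m ≤ ∑ i ∈ Finset.Icc 1 (m + 1), u i :=
      Finset.single_le_sum (fun i hi => hu i hi) hmem
    have h2 : u (m + 1) ≤ ∑ i ∈ Finset.Icc 1 (m + 1), u i :=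
      Finset.single_le_sum (fun i hi => hu i hi) hmem1
    have h3 : 0 ≤ ∑ j ∈ Finset.Icc 1 h, v j :=
      Finset.sum_nonneg fun j hj => hv j hj
    have h4 : 0 ≤ ∑ i ∈ Finset.Icc 1 (m + 1), u i :=
      Finset.sum_nonneg fun i hi => hu i hi
    refine ⟨by rw [hS]; linarith, by rw [hS]; linarith, by rw [hS]; linarith⟩
  obtain ⟨hS1, hS2, hS0⟩ := hSu
  have hBS : B ≤ S ^ 2 := by
    rw [hB, sq]
    exact mul_le_mul hS1 hS2 hum1 hS0
  have key1 : ∀ i ∈ Finset.Icc 1 (m - 1), f i ≤ u m * u (m + 1) := by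
    intro i hi
    rw [hfi i hi, ← hB]; linarith
  have key2 : f m ≤ ((l : ℝ) - 1) * (u m * u (m + 1)) := by
    rw [hfm, ← hB]; nlinarith
  have key3 : f m + ((l : ℝ) - 1) * f (m + 1)
      ≤ ((l : ℝ) - 1) * ((k : ℝ) - 1) * (u m * u (m + 1)) := by
    rw [hfm, hfm1, ← hB]
    nlinarith [mul_nonneg (mul_nonneg (by linarith : (0:ℝ) ≤ (l:ℝ) - 1)
      (by linarith : (0:ℝ) ≤ (k:ℝ) - 1)) hA0]
  have key4 : ∀ j ∈ Finset.Icc 1 h, f (m + 1) + g j ≤ ((k : ℝ) - 1) * (u m * u (m + 1)) := by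
    intro j hj
    rw [hfm1, hg j hj, ← hB]
    nlinarith [mul_nonneg (by linarith : (0:ℝ) ≤ (k:ℝ) - 1) hA0]
  have hS20 : 0 ≤ S ^ 2 := sq_nonneg S
  have hl0 : (0:ℝ) ≤ (l:ℝ) - 1 := by linarith
  have hk0 : (0:ℝ) ≤ (k:ℝ) - 1 := by linarith
  have hl2 : (1:ℝ) ≤ (l:ℝ) - 1 := by linarith
  have hk2 : (1:ℝ) ≤ (k:ℝ) - 1 := by linarith
  have hone : (1:ℝ) ≤ ((l:ℝ) - 1) * ((k:ℝ) - 1) := by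
    have := mul_le_mul hl2 hk2 zero_le_one hl0
    linarith
  have e7 : S ^ 2 ≤ ((l:ℝ) - 1) * ((k:ℝ) - 1) * S ^ 2 := by
    have := mul_le_mul_of_nonneg_right hone hS20
    linarith
  have e5 : ((l:ℝ) - 1) * S ^ 2 ≤ ((l:ℝ) - 1) * ((k:ℝ) - 1) * S ^ 2 :=
    mul_le_mul_of_nonneg_right (le_mul_of_one_le_right hl0 hk2) hS20
  have e6 : ((k:ℝ) - 1) * S ^ 2 ≤ ((l:ℝ) - 1) * ((k:ℝ) - 1) * S ^ 2 :=
    mul_le_mul_of_nonneg_right (le_mul_of_one_le_left hk0 hl2) hS20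
  have e2 : ((l:ℝ) - 1) * B ≤ ((l:ℝ) - 1) * S ^ 2 := mul_le_mul_of_nonneg_left hBS hl0
  have e3 : ((k:ℝ) - 1) * B ≤ ((k:ℝ) - 1) * S ^ 2 := mul_le_mul_of_nonneg_left hBS hk0
  have e4 : ((l:ℝ) - 1) * ((k:ℝ) - 1) * B ≤ ((l:ℝ) - 1) * ((k:ℝ) - 1) * S ^ 2 := by
    rw [mul_assoc, mul_assoc]
    exact mul_le_mul_of_nonneg_left e3 hl0
  refine ⟨key1, key2, key3, key4, ?_, ?_, ?_, ?_⟩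
  · intro i hi
    have := key1 i hi
    rw [← hB] at this
    linarith
  · rw [← hB] at key2; linarith
  · rw [← hB] at key3; linarith
  · intro j hj
    have := key4 j hj
    rw [← hB] at this
    linarith
end

section
/- For all u₁, u₂, u₃ > 0 one has the identity (log u₁)·f₁(u) + (log u₂)·f₂(u) + (log u₃)·f₃(u) = −Φ(u₁u₂, u₁³) − Φ(u₁³, u₁²u₃) − Φ(u₁²u₃, u₂²) − Φ(u₂², u₁u₂), and in particular (log u₁)·f₁(u) + (log u₂)·f₂(u) + (log u₃)·f₃(u) ≤ 0. -/
lemma phi_aux_nonneg (x y : ℝ) (hx : 0 < x) (hy : 0 < y) :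
    0 ≤ x * Real.log (x / y) - x + y := by
  have h := Real.log_le_sub_one_of_pos (show (0:ℝ) < y / x by positivity)
  have hlog : Real.log (y / x) = - Real.log (x / y) := by
    rw [← Real.log_inv, inv_div]
  rw [hlog] at h
  have hx' : x ≠ 0 := ne_of_gt hx
  have : y / x - 1 = (y - x) / x := by field_simp
  rw [this] at h
  have h2 : x * (-Real.log (x / y)) ≤ x * ((y - x) / x) :=
    mul_le_mul_of_nonneg_left h hx.le
  rw [mul_div_cancel₀ _ hx'] at h2
  linarith

/-- **Entropy dissipation for system (S3) of Example 4.3.** With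
`f₁ = 2u₁u₂ - u₁³ - 2u₁²u₃ + u₂²`, `f₂ = -u₁u₂ + 2u₁²u₃ - u₂²`, `f₃ = u₁³ - u₁²u₃`
and `Φ(x,y) = x log(x/y) - x + y` (for positive `x, y`), one has for all positive
`u₁, u₂, u₃`:
`∑ log(uᵢ) fᵢ = -Φ(u₁u₂,u₁³) - Φ(u₁³,u₁²u₃) - Φ(u₁²u₃,u₂²) - Φ(u₂²,u₁u₂) ≤ 0`. -/
theorem S3_entropy_dissipation (u₁ u₂ u₃ : ℝ)
    (h1 : 0 < u₁) (h2 : 0 < u₂) (h3 : 0 < u₃)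
    (Φ : ℝ → ℝ → ℝ)
    (hΦ : ∀ x y : ℝ, 0 < x → 0 < y → Φ x y = x * Real.log (x / y) - x + y) :
    Real.log u₁ * (2 * u₁ * u₂ - u₁ ^ 3 - 2 * u₁ ^ 2 * u₃ + u₂ ^ 2)
        + Real.log u₂ * (-(u₁ * u₂) + 2 * u₁ ^ 2 * u₃ - u₂ ^ 2)
        + Real.log u₃ * (u₁ ^ 3 - u₁ ^ 2 * u₃)
      = -Φ (u₁ * u₂) (u₁ ^ 3) - Φ (u₁ ^ 3) (u₁ ^ 2 * u₃)
          - Φ (u₁ ^ 2 * u₃) (u₂ ^ 2) - Φ (u₂ ^ 2) (u₁ * u₂) ∧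
    Real.log u₁ * (2 * u₁ * u₂ - u₁ ^ 3 - 2 * u₁ ^ 2 * u₃ + u₂ ^ 2)
        + Real.log u₂ * (-(u₁ * u₂) + 2 * u₁ ^ 2 * u₃ - u₂ ^ 2)
        + Real.log u₃ * (u₁ ^ 3 - u₁ ^ 2 * u₃) ≤ 0 := by
  have p12 : (0:ℝ) < u₁ * u₂ := by positivity
  have p3 : (0:ℝ) < u₁ ^ 3 := by positivity
  have p23 : (0:ℝ) < u₁ ^ 2 * u₃ := by positivity
  have p22 : (0:ℝ) < u₂ ^ 2 := by positivity
  constructor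
  · rw [hΦ _ _ p12 p3, hΦ _ _ p3 p23, hΦ _ _ p23 p22, hΦ _ _ p22 p12]
    rw [Real.log_div p12.ne' p3.ne', Real.log_div p3.ne' p23.ne',
        Real.log_div p23.ne' p22.ne', Real.log_div p22.ne' p12.ne',
        Real.log_mul h1.ne' h2.ne', Real.log_mul (pow_ne_zero 2 h1.ne') h3.ne',
        Real.log_pow, Real.log_pow, Real.log_pow]
    push_cast
    ring
  · have n1 := phi_aux_nonneg _ _ p12 p3
    have n2 := phi_aux_nonneg _ _ p3 p23
    have n3 := phi_aux_nonneg _ _ p23 p22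
    have n4 := phi_aux_nonneg _ _ p22 p12
    rw [Real.log_div p12.ne' p3.ne', Real.log_mul h1.ne' h2.ne', Real.log_pow] at n1
    rw [Real.log_div p3.ne' p23.ne', Real.log_mul (pow_ne_zero 2 h1.ne') h3.ne',
        Real.log_pow, Real.log_pow] at n2
    rw [Real.log_div p23.ne' p22.ne', Real.log_mul (pow_ne_zero 2 h1.ne') h3.ne',
        Real.log_pow, Real.log_pow] at n3
    rw [Real.log_div p22.ne' p12.ne', Real.log_mul h1.ne' h2.ne', Real.log_pow] at n4
    push_cast at n1 n2 n3 n4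
    nlinarith [n1, n2, n3, n4]
end
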